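/- arXiv:1109.2207 — 3 statements merged into one kernel-verified Lean document; each statement's English description precedes it below -/
import Mathlib

section
/- Let K be a number field containing a primitive third root of unity, and let E be an elliptic curve over K with a point Q of order 3 defined over K. Suppose P is a point of order 3 on E (over an algebraic closure of K) with P ∉ ⟨Q⟩ whose x-coordinate lies in K. Then the y-coordinate of P also lies in K, and hence the full 3-torsion E[3] is defined over K. -/
/-!
Since `P ∉ ⟨Q⟩`, the `x`-coordinates `x₁, x₂, x₃, x₄` of `Q, P, P + Q, P - Q` are four distinct
roots of `ψ₃ = 3X⁴ + b₂X³ + 3b₄X² + 3b₆X + b₈`, so `ψ₃ = 3 ∏ (X - xᵢ)` and every nonzero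
3-torsion point is one of `±Q, ±P, ±(P + Q), ±(P - Q)`. The invariants of `ψ₃` are `I = 0` and
`J = 27 Δ`, so its discriminant gives `27 V² = -Δ²` for `V = ∏_{i<j} (xᵢ - xⱼ)`; as `-3` is a
square in `K`, `V` lies in `K`. A conjugation `σ` over `K` fixes `x` and `Q`, so if it moves `y`
it sends `P` to `-P`, hence fixes `x₁, x₂` and swaps `x₃, x₄`, and `σ V = -V ≠ V`. So `y ∈ K`,
and then `E[3] = ⟨P, Q⟩` is defined over `K`.
-/

open WeierstrassCurve WeierstrassCurve.Affine
open scoped WeierstrassCurve.Affine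

section Quartic

variable {R : Type*} [CommRing R]

def vandermonde₄ (r₁ r₂ r₃ r₄ : R) : R :=
  (r₁ - r₂) * (r₁ - r₃) * (r₁ - r₄) * (r₂ - r₃) * (r₂ - r₄) * (r₃ - r₄)

/-- The classical invariants `I` and `J` of the binary quartic `a x⁴ + b x³ + c x² + d x + e`. -/
def quarticI (a b c d e : R) : R :=
  12 * a * e - 3 * b * d + c ^ 2

def quarticJ (a b c d e : R) : R :=
  72 * a * c * e + 9 * b * c * d - 27 * a * d ^ 2 - 27 * e * b ^ 2 - 2 * c ^ 3

lemma quartic_discr_eq_invariants (a r₁ r₂ r₃ r₄ : R) :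
    27 * (a ^ 3 * vandermonde₄ r₁ r₂ r₃ r₄) ^ 2 =
      4 * quarticI a (-a * (r₁ + r₂ + r₃ + r₄))
          (a * (r₁ * r₂ + r₁ * r₃ + r₁ * r₄ + r₂ * r₃ + r₂ * r₄ + r₃ * r₄))
          (-a * (r₁ * r₂ * r₃ + r₁ * r₂ * r₄ + r₁ * r₃ * r₄ + r₂ * r₃ * r₄))
          (a * (r₁ * r₂ * r₃ * r₄)) ^ 3 -
        quarticJ a (-a * (r₁ + r₂ + r₃ + r₄))
          (a * (r₁ * r₂ + r₁ * r₃ + r₁ * r₄ + r₂ * r₃ + r₂ * r₄ + r₃ * r₄))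
          (-a * (r₁ * r₂ * r₃ + r₁ * r₂ * r₄ + r₁ * r₃ * r₄ + r₂ * r₃ * r₄))
          (a * (r₁ * r₂ * r₃ * r₄)) ^ 2 := by
  simp only [vandermonde₄, quarticI, quarticJ]
  ring

lemma quartic_coeffs_eq_of_roots [IsDomain R] {a b c d e r₁ r₂ r₃ r₄ : R}
    (hV : vandermonde₄ r₁ r₂ r₃ r₄ ≠ 0)
    (h₁ : a * r₁ ^ 4 + b * r₁ ^ 3 + c * r₁ ^ 2 + d * r₁ + e = 0)
    (h₂ : a * r₂ ^ 4 + b * r₂ ^ 3 + c * r₂ ^ 2 + d * r₂ + e = 0)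
    (h₃ : a * r₃ ^ 4 + b * r₃ ^ 3 + c * r₃ ^ 2 + d * r₃ + e = 0)
    (h₄ : a * r₄ ^ 4 + b * r₄ ^ 3 + c * r₄ ^ 2 + d * r₄ + e = 0) :
    b = -a * (r₁ + r₂ + r₃ + r₄) ∧
      c = a * (r₁ * r₂ + r₁ * r₃ + r₁ * r₄ + r₂ * r₃ + r₂ * r₄ + r₃ * r₄) ∧
      d = -a * (r₁ * r₂ * r₃ + r₁ * r₂ * r₄ + r₁ * r₃ * r₄ + r₂ * r₃ * r₄) ∧
      e = a * (r₁ * r₂ * r₃ * r₄) := by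
  simp only [vandermonde₄, ne_eq, mul_eq_zero, sub_eq_zero, not_or] at hV
  obtain ⟨⟨⟨⟨⟨h12, h13⟩, h14⟩, h23⟩, h24⟩, h34⟩ := hV
  have d₁₂ : a * (r₁ ^ 3 + r₁ ^ 2 * r₂ + r₁ * r₂ ^ 2 + r₂ ^ 3) + b * (r₁ ^ 2 + r₁ * r₂ + r₂ ^ 2)
      + c * (r₁ + r₂) + d = 0 :=
    eq_zero_of_ne_zero_of_mul_left_eq_zero (sub_ne_zero.mpr h12) (by linear_combination h₁ - h₂)
  have d₁₃ : a * (r₁ ^ 3 + r₁ ^ 2 * r₃ + r₁ * r₃ ^ 2 + r₃ ^ 3) + b * (r₁ ^ 2 + r₁ * r₃ + r₃ ^ 2)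
      + c * (r₁ + r₃) + d = 0 :=
    eq_zero_of_ne_zero_of_mul_left_eq_zero (sub_ne_zero.mpr h13) (by linear_combination h₁ - h₃)
  have d₁₄ : a * (r₁ ^ 3 + r₁ ^ 2 * r₄ + r₁ * r₄ ^ 2 + r₄ ^ 3) + b * (r₁ ^ 2 + r₁ * r₄ + r₄ ^ 2)
      + c * (r₁ + r₄) + d = 0 :=
    eq_zero_of_ne_zero_of_mul_left_eq_zero (sub_ne_zero.mpr h14) (by linear_combination h₁ - h₄)
  have d₁₂₃ : a * (r₁ ^ 2 + r₂ ^ 2 + r₃ ^ 2 + r₁ * r₂ + r₁ * r₃ + r₂ * r₃)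
      + b * (r₁ + r₂ + r₃) + c = 0 :=
    eq_zero_of_ne_zero_of_mul_left_eq_zero (sub_ne_zero.mpr h23) (by linear_combination d₁₂ - d₁₃)
  have d₁₂₄ : a * (r₁ ^ 2 + r₂ ^ 2 + r₄ ^ 2 + r₁ * r₂ + r₁ * r₄ + r₂ * r₄)
      + b * (r₁ + r₂ + r₄) + c = 0 :=
    eq_zero_of_ne_zero_of_mul_left_eq_zero (sub_ne_zero.mpr h24) (by linear_combination d₁₂ - d₁₄)
  have d₁₂₃₄ : a * (r₁ + r₂ + r₃ + r₄) + b = 0 :=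
    eq_zero_of_ne_zero_of_mul_left_eq_zero (sub_ne_zero.mpr h34) (by linear_combination d₁₂₃ - d₁₂₄)
  have hb : b = -a * (r₁ + r₂ + r₃ + r₄) := by linear_combination d₁₂₃₄
  have hc : c = a * (r₁ * r₂ + r₁ * r₃ + r₁ * r₄ + r₂ * r₃ + r₂ * r₄ + r₃ * r₄) := by
    linear_combination d₁₂₃ - (r₁ + r₂ + r₃) * hb
  have hd : d = -a * (r₁ * r₂ * r₃ + r₁ * r₂ * r₄ + r₁ * r₃ * r₄ + r₂ * r₃ * r₄) := by
    linear_combination d₁₂ - (r₁ ^ 2 + r₁ * r₂ + r₂ ^ 2) * hb - (r₁ + r₂) * hc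
  refine ⟨hb, hc, hd, ?_⟩
  linear_combination h₁ - r₁ ^ 3 * hb - r₁ ^ 2 * hc - r₁ * hd

end Quartic

lemma IsPrimitiveRoot.isSquare_neg_three {R : Type*} [CommRing R] [IsDomain R] {ζ : R}
    (hζ : IsPrimitiveRoot ζ 3) : IsSquare (-3 : R) :=
  ⟨2 * ζ + 1, by
    have h := hζ.geom_sum_eq_zero (by norm_num)
    simp only [Finset.sum_range_succ, Finset.sum_range_zero] at h
    linear_combination -4 * h⟩

lemma mem_range_algebraMap_of_mul_sq_eq {K L : Type*} [Field K] [Field L] [Algebra K L]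
    (hs : IsSquare (-3 : K)) (h3 : (3 : L) ≠ 0) {v : L} {d : K}
    (h : 27 * v ^ 2 = -algebraMap K L d ^ 2) : v ∈ Set.range (algebraMap K L) := by
  obtain ⟨s, hs⟩ := hs
  have h9 : (9 : L) ≠ 0 := by rw [show (9 : L) = 3 * 3 by norm_num]; exact mul_ne_zero h3 h3
  have hs' : algebraMap K L s ^ 2 = -3 := by rw [← map_pow, sq, ← hs, map_neg, map_ofNat]
  have hsq : (9 * v) ^ 2 = algebraMap K L (s * d) ^ 2 := by
    rw [map_mul, mul_pow, mul_pow, hs']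
    linear_combination 3 * h
  rcases sq_eq_sq_iff_eq_or_eq_neg.mp hsq with h9v | h9v
  · exact ⟨s * d / 9, by rw [map_div₀, map_ofNat, eq_comm, eq_div_iff h9]; linear_combination h9v⟩
  · exact ⟨-(s * d) / 9, by
      rw [map_div₀, map_neg, map_ofNat, eq_comm, eq_div_iff h9]; linear_combination h9v⟩

def IndependentModThree {G : Type*} [AddCommGroup G] (P Q : G) : Prop :=
  ∀ i j : ℤ, i • P + j • Q = 0 → 3 ∣ i ∧ 3 ∣ j

lemma independentModThree_of_notMem_zmultiples {G : Type*} [AddCommGroup G] {P Q : G}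
    (hP : 3 • P = 0) (hQ : addOrderOf Q = 3) (hPQ : P ∉ AddSubgroup.zmultiples Q) :
    IndependentModThree P Q := by
  intro i j h
  have hP' : (3 : ℤ) • P = 0 := by exact_mod_cast hP
  have hi : 3 ∣ i := by
    by_contra hi
    obtain ⟨u, v, huv⟩ := (Int.prime_three.irreducible.coprime_iff_not_dvd).mpr hi
    refine hPQ (AddSubgroup.mem_zmultiples_iff.mpr ⟨-(v * j), ?_⟩)
    calc (-(v * j)) • Q = v • (i • P) := by rw [eq_neg_of_add_eq_zero_left h]; simp [mul_zsmul]
      _ = P := by rw [smul_smul, ← sub_eq_of_eq_add' huv.symm]; simp [sub_zsmul, mul_zsmul, hP']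
  obtain ⟨k, rfl⟩ := hi
  have hj : j • Q = 0 := by simpa [mul_comm (3 : ℤ), mul_zsmul, hP'] using h
  exact ⟨⟨k, rfl⟩, by exact_mod_cast hQ ▸ addOrderOf_dvd_iff_zsmul_eq_zero.mpr hj⟩

namespace WeierstrassCurve

lemma eval_Ψ₃ {R : Type*} [CommRing R] (W : WeierstrassCurve R) (t : R) :
    W.Ψ₃.eval t = 3 * t ^ 4 + W.b₂ * t ^ 3 + 3 * W.b₄ * t ^ 2 + 3 * W.b₆ * t + W.b₈ := by
  simp [Ψ₃]

lemma quarticI_Ψ₃ {R : Type*} [CommRing R] (W : WeierstrassCurve R) :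
    quarticI 3 W.b₂ (3 * W.b₄) (3 * W.b₆) W.b₈ = 0 := by
  rw [quarticI]
  linear_combination 9 * W.b_relation

lemma quarticJ_Ψ₃ {R : Type*} [CommRing R] (W : WeierstrassCurve R) :
    quarticJ 3 W.b₂ (3 * W.b₄) (3 * W.b₆) W.b₈ = 27 * W.Δ := by
  rw [quarticJ, Δ]
  linear_combination 162 * W.b₄ * W.b_relation

variable {F : Type*} [Field F] (W : WeierstrassCurve F) {r₁ r₂ r₃ r₄ : F}

lemma eval_Ψ₃_eq_prod_of_roots (hV : vandermonde₄ r₁ r₂ r₃ r₄ ≠ 0) (h₁ : W.Ψ₃.eval r₁ = 0)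
    (h₂ : W.Ψ₃.eval r₂ = 0) (h₃ : W.Ψ₃.eval r₃ = 0) (h₄ : W.Ψ₃.eval r₄ = 0) (t : F) :
    W.Ψ₃.eval t = 3 * ((t - r₁) * (t - r₂) * (t - r₃) * (t - r₄)) := by
  rw [eval_Ψ₃] at h₁ h₂ h₃ h₄ ⊢
  obtain ⟨hb, hc, hd, he⟩ := quartic_coeffs_eq_of_roots hV h₁ h₂ h₃ h₄
  linear_combination t ^ 3 * hb + t ^ 2 * hc + t * hd + he

lemma sq_vandermonde₄_of_roots (h3 : (3 : F) ≠ 0) (hV : vandermonde₄ r₁ r₂ r₃ r₄ ≠ 0)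
    (h₁ : W.Ψ₃.eval r₁ = 0) (h₂ : W.Ψ₃.eval r₂ = 0) (h₃ : W.Ψ₃.eval r₃ = 0)
    (h₄ : W.Ψ₃.eval r₄ = 0) :
    27 * vandermonde₄ r₁ r₂ r₃ r₄ ^ 2 = -W.Δ ^ 2 := by
  rw [eval_Ψ₃] at h₁ h₂ h₃ h₄
  obtain ⟨hb, hc, hd, he⟩ := quartic_coeffs_eq_of_roots hV h₁ h₂ h₃ h₄
  have hdisc := quartic_discr_eq_invariants 3 r₁ r₂ r₃ r₄
  rw [← hb, ← hc, ← hd, ← he, quarticI_Ψ₃, quarticJ_Ψ₃] at hdisc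
  have h729 : (3 : F) ^ 6 * (27 * vandermonde₄ r₁ r₂ r₃ r₄ ^ 2 + W.Δ ^ 2) = 0 := by
    linear_combination hdisc
  linear_combination eq_zero_of_ne_zero_of_mul_left_eq_zero (pow_ne_zero 6 h3) h729

end WeierstrassCurve

namespace WeierstrassCurve.Affine

lemma addX_slope_self_sub_mul_sq {F : Type*} [Field F] [DecidableEq F] {W : Affine F} {x y : F}
    (h : W.Equation x y) (hy : y ≠ W.negY x y) :
    (W.addX x x (W.slope x x y y) - x) * (y - W.negY x y) ^ 2 = -W.Ψ₃.eval x := by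
  rw [equation_iff] at h
  have hψ₂ : y - W.negY x y ≠ 0 := sub_ne_zero.mpr hy
  rw [slope_of_Y_ne rfl hy, addX, eval_Ψ₃]
  field_simp
  simp only [negY, b₂, b₄, b₆, b₈]
  linear_combination (-12 * x - 4 * W.a₂ - W.a₁ ^ 2) * h

end WeierstrassCurve.Affine

namespace WeierstrassCurve.Affine.Point

section xCoord

variable {R : Type*} [CommRing R] {W : Affine R}

/-- The `x`-coordinate of a point, with the junk value `0` at the point at infinity. -/
def xCoord : W.Point → R
  | zero => 0
  | some x _ _ => x

@[simp]
lemma xCoord_neg (A : W.Point) : (-A).xCoord = A.xCoord := by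
  cases A <;> rfl

lemma xCoord_map {F K : Type*} [Field F] [Field K] [Algebra R F] [Algebra R K] [DecidableEq F]
    [DecidableEq K] {W' : WeierstrassCurve R} (f : F →ₐ[R] K) (A : (W'⁄F).Point) :
    (Point.map (W' := W') f A).xCoord = f A.xCoord := by
  cases A
  · exact (_root_.map_zero f).symm
  · rfl

end xCoord

section Field

variable {F : Type*} [Field F] {W : Affine F}

lemma xCoord_eq_xCoord_iff {A B : W.Point} (hA : A ≠ 0) (hB : B ≠ 0) :
    A.xCoord = B.xCoord ↔ A = B ∨ A = -B := by
  cases A with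
  | zero => exact absurd rfl hA
  | some x₁ y₁ h₁ =>
    cases B with
    | zero => exact absurd rfl hB
    | some x₂ y₂ h₂ => exact X_eq_iff

variable [DecidableEq F]

lemma eval_Ψ₃_xCoord_eq_zero {A : W.Point} (hA : A ≠ 0) (h3 : 3 • A = 0) :
    W.Ψ₃.eval A.xCoord = 0 := by
  have h2 : A + A = -A := eq_neg_of_add_eq_zero_left (by rw [← two_nsmul, ← succ_nsmul]; exact h3)
  cases A with
  | zero => exact absurd rfl hA
  | some x y h =>
    have hy : y ≠ W.negY x y := fun hy ↦ hA (neg_eq_zero.mp (h2 ▸ add_self_of_Y_eq hy))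
    rw [add_self_of_Y_ne hy, neg_some] at h2
    have hψ₃ := addX_slope_self_sub_mul_sq h.1 hy
    rwa [(some.inj h2).1, sub_self, zero_mul, eq_comm, neg_eq_zero] at hψ₃

variable {P Q : W.Point}

lemma xCoord_zsmul_add_zsmul_ne (hind : IndependentModThree P Q)
    (i j k l : ℤ) (h : ¬(3 ∣ i ∧ 3 ∣ j) ∧ ¬(3 ∣ k ∧ 3 ∣ l) ∧ ¬(3 ∣ i - k ∧ 3 ∣ j - l) ∧
      ¬(3 ∣ i + k ∧ 3 ∣ j + l)) :
    (i • P + j • Q).xCoord ≠ (k • P + l • Q).xCoord := by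
  obtain ⟨hij, hkl, hsub, hadd⟩ := h
  rw [Ne, xCoord_eq_xCoord_iff (fun h0 ↦ hij (hind i j h0)) (fun h0 ↦ hkl (hind k l h0))]
  rintro (heq | heq)
  · exact hsub (hind _ _ (by linear_combination (norm := module) heq))
  · exact hadd (hind _ _ (by linear_combination (norm := module) heq))

lemma vandermonde₄_xCoord_ne_zero (hind : IndependentModThree P Q) :
    vandermonde₄ Q.xCoord P.xCoord (P + Q).xCoord (P - Q).xCoord ≠ 0 := by
  have key := xCoord_zsmul_add_zsmul_ne hind
  simp only [vandermonde₄, ne_eq, mul_eq_zero, sub_eq_zero, not_or]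
  refine ⟨⟨⟨⟨⟨?_, ?_⟩, ?_⟩, ?_⟩, ?_⟩, ?_⟩
  · simpa using key 0 1 1 0 (by decide)
  · simpa using key 0 1 1 1 (by decide)
  · simpa [← sub_eq_add_neg] using key 0 1 1 (-1) (by decide)
  · simpa using key 1 0 1 1 (by decide)
  · simpa [← sub_eq_add_neg] using key 1 0 1 (-1) (by decide)
  · simpa [← sub_eq_add_neg] using key 1 1 1 (-1) (by decide)

lemma eval_Ψ₃_xCoord_of_independent (hP : 3 • P = 0) (hQ : 3 • Q = 0)
    (hind : IndependentModThree P Q) :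
    W.Ψ₃.eval Q.xCoord = 0 ∧ W.Ψ₃.eval P.xCoord = 0 ∧ W.Ψ₃.eval (P + Q).xCoord = 0 ∧
      W.Ψ₃.eval (P - Q).xCoord = 0 := by
  have key (i j : ℤ) (hij : ¬(3 ∣ i ∧ 3 ∣ j)) : W.Ψ₃.eval (i • P + j • Q).xCoord = 0 :=
    eval_Ψ₃_xCoord_eq_zero (fun h0 ↦ hij (hind i j h0)) (by
      rw [smul_add, smul_comm, hP, smul_comm, hQ, smul_zero, smul_zero, add_zero])
  refine ⟨?_, ?_, ?_, ?_⟩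
  · simpa using key 0 1 (by decide)
  · simpa using key 1 0 (by decide)
  · simpa using key 1 1 (by decide)
  · simpa [← sub_eq_add_neg] using key 1 (-1) (by decide)

lemma exists_eq_zsmul_add_zsmul (h3 : (3 : F) ≠ 0) (hP : 3 • P = 0) (hQ : 3 • Q = 0)
    (hind : IndependentModThree P Q) {R : W.Point} (hR : 3 • R = 0) :
    ∃ i j : ℤ, R = i • P + j • Q := by
  rcases eq_or_ne R 0 with rfl | hR0
  · exact ⟨0, 0, by simp⟩
  have of_xCoord_eq (i j : ℤ) (hij : ¬(3 ∣ i ∧ 3 ∣ j)) (hx : R.xCoord = (i • P + j • Q).xCoord) :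
      ∃ i j : ℤ, R = i • P + j • Q := by
    rcases (xCoord_eq_xCoord_iff hR0 fun h0 ↦ hij (hind i j h0)).mp hx with rfl | rfl
    exacts [⟨i, j, rfl⟩, ⟨-i, -j, by module⟩]
  obtain ⟨h₁, h₂, h₃, h₄⟩ := eval_Ψ₃_xCoord_of_independent hP hQ hind
  have hroot := eval_Ψ₃_xCoord_eq_zero hR0 hR
  rw [eval_Ψ₃_eq_prod_of_roots W (vandermonde₄_xCoord_ne_zero hind) h₁ h₂ h₃ h₄] at hroot
  simp only [mul_eq_zero, h3, false_or, sub_eq_zero] at hroot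
  rcases hroot with ((hx | hx) | hx) | hx
  · exact of_xCoord_eq 0 1 (by decide) (by simpa using hx)
  · exact of_xCoord_eq 1 0 (by decide) (by simpa using hx)
  · exact of_xCoord_eq 1 1 (by decide) (by simpa using hx)
  · exact of_xCoord_eq 1 (-1) (by decide) (by simpa [← sub_eq_add_neg] using hx)

end Field

lemma map_eq_self_of_xCoord_fixed {K L : Type*} [Field K] [Field L] [Algebra K L] [DecidableEq L]
    {W : WeierstrassCurve K} (hs : IsSquare (-3 : K)) (h2 : (2 : L) ≠ 0) (h3 : (3 : L) ≠ 0)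
    {P Q : (W⁄L).Point} (hP : 3 • P = 0) (hQ : 3 • Q = 0)
    (hind : IndependentModThree P Q) (σ : L →ₐ[K] L)
    (hσQ : map (W' := W) σ Q = Q) (hσx : σ P.xCoord = P.xCoord) :
    map (W' := W) σ P = P := by
  set V := vandermonde₄ Q.xCoord P.xCoord (P + Q).xCoord (P - Q).xCoord
  have hV : V ≠ 0 := vandermonde₄_xCoord_ne_zero hind
  obtain ⟨h₁, h₂, h₃, h₄⟩ := eval_Ψ₃_xCoord_of_independent hP hQ hind
  have hVΔ : 27 * V ^ 2 = -algebraMap K L W.Δ ^ 2 := by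
    rw [← W.map_Δ]; exact sq_vandermonde₄_of_roots _ h3 hV h₁ h₂ h₃ h₄
  obtain ⟨v, hv⟩ := mem_range_algebraMap_of_mul_sq_eq hs h3 hVΔ
  have hσV : σ V = V := by rw [← hv, σ.commutes]
  have hP0 : P ≠ 0 := fun h0 ↦ by simpa using hind 1 0 (by simpa using h0)
  have hσP0 : map (W' := W) σ P ≠ 0 := fun h0 ↦ hP0 (map_injective σ (h0.trans (map_zero σ).symm))
  refine ((xCoord_eq_xCoord_iff hσP0 hP0).mp (by rw [xCoord_map, hσx])).resolve_right fun hσP ↦ ?_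
  have hσadd : map (W' := W) σ (P + Q) = -(P - Q) := by rw [map_add, hσP, hσQ]; abel
  have hσsub : map (W' := W) σ (P - Q) = -(P + Q) := by rw [map_sub, hσP, hσQ]; abel
  have hσV_neg : σ V = -V := by
    simp only [V, vandermonde₄, map_mul, map_sub, ← xCoord_map, hσQ, hσP, hσadd, hσsub, xCoord_neg]
    ring
  exact hV (mul_left_cancel₀ h2 (by linear_combination hσV_neg - hσV))

end WeierstrassCurve.Affine.Point

open Classical in
theorem threeTorsion_defined_over_K_general
    {K : Type*} [Field K] [NumberField K] (hζ : ∃ ζ : K, IsPrimitiveRoot ζ 3)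
    (W : WeierstrassCurve K)
    (Q : (W.baseChange K).toAffine.Point) (hQ : addOrderOf Q = 3)
    (x y : AlgebraicClosure K)
    (h : (W.baseChange (AlgebraicClosure K)).toAffine.Nonsingular x y)
    (hP : addOrderOf (Point.some x y h : (W.baseChange (AlgebraicClosure K)).toAffine.Point) = 3)
    (hPQ : (Point.some x y h : (W.baseChange (AlgebraicClosure K)).toAffine.Point) ∉
      AddSubgroup.zmultiples (Point.map (W' := W) (Algebra.ofId K (AlgebraicClosure K)) Q))
    (hx : x ∈ Set.range (algebraMap K (AlgebraicClosure K))) :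
    y ∈ Set.range (algebraMap K (AlgebraicClosure K)) ∧
      ∀ R : (W.baseChange (AlgebraicClosure K)).toAffine.Point, 3 • R = 0 →
        ∃ R₀ : (W.baseChange K).toAffine.Point, Point.map (W' := W) (Algebra.ofId K (AlgebraicClosure K)) R₀ = R := by
  obtain ⟨ζ, hζ⟩ := hζ
  set f := Algebra.ofId K (AlgebraicClosure K)
  set P : (W.baseChange (AlgebraicClosure K)).toAffine.Point := Point.some x y h
  have hQ' : addOrderOf (Point.map (W' := W) f Q) = 3 := by
    rwa [addOrderOf_injective _ (Point.map_injective f)]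
  have h3P : 3 • P = 0 := hP ▸ addOrderOf_nsmul_eq_zero P
  have h3Q : 3 • Point.map (W' := W) f Q = 0 := hQ' ▸ addOrderOf_nsmul_eq_zero _
  have hind := independentModThree_of_notMem_zmultiples h3P hQ' hPQ
  obtain ⟨x₀, rfl⟩ := hx
  have hy : y ∈ Set.range (algebraMap K (AlgebraicClosure K)) := by
    refine (InfiniteGalois.mem_range_algebraMap_iff_fixed y).mpr fun σ ↦ ?_
    have hσQ : Point.map (W' := W) σ.toAlgHom (Point.map f Q) = Point.map f Q := by
      rw [Point.map_map, Subsingleton.elim (σ.toAlgHom.comp f) f]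
    have hσP := Point.map_eq_self_of_xCoord_fixed hζ.isSquare_neg_three two_ne_zero
      three_ne_zero h3P h3Q hind σ.toAlgHom hσQ (σ.commutes x₀)
    exact (Point.some.inj hσP).2
  obtain ⟨y₀, rfl⟩ := hy
  let P₀ : (W.baseChange K).toAffine.Point :=
    Point.some x₀ y₀ ((W.toAffine.baseChange_nonsingular f.injective x₀ y₀).mp h)
  refine ⟨⟨y₀, rfl⟩, fun R hR ↦ ?_⟩
  obtain ⟨i, j, rfl⟩ := Point.exists_eq_zsmul_add_zsmul three_ne_zero h3P h3Q hind hR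
  exact ⟨i • P₀ + j • Q, by rw [map_add, map_zsmul, map_zsmul]; rfl⟩

open Classical in
/-- Let `K` be a number field containing a primitive third root of unity and `E` an elliptic
curve over `K` with a `K`-rational point `Q` of order 3.  If `P` is a point of order 3 on `E`
over an algebraic closure of `K`, not lying in `⟨Q⟩`, whose `x`-coordinate lies in `K`, then its
`y`-coordinate also lies in `K`, and hence all of the 3-torsion `E[3]` is defined over `K`. -/
theorem threeTorsion_defined_over_K
    {K : Type*} [Field K] [NumberField K] (hζ : ∃ ζ : K, IsPrimitiveRoot ζ 3)
    (W : WeierstrassCurve K) (hΔ : W.Δ ≠ 0)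
    (Q : (W.baseChange K).toAffine.Point) (hQ : addOrderOf Q = 3)
    (x y : AlgebraicClosure K)
    (h : (W.baseChange (AlgebraicClosure K)).toAffine.Nonsingular x y)
    (hP : addOrderOf (Point.some x y h : (W.baseChange (AlgebraicClosure K)).toAffine.Point) = 3)
    (hPQ : (Point.some x y h : (W.baseChange (AlgebraicClosure K)).toAffine.Point) ∉
      AddSubgroup.zmultiples (Point.map (W' := W) (Algebra.ofId K (AlgebraicClosure K)) Q))
    (hx : x ∈ Set.range (algebraMap K (AlgebraicClosure K))) :
    y ∈ Set.range (algebraMap K (AlgebraicClosure K)) ∧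
      ∀ R : (W.baseChange (AlgebraicClosure K)).toAffine.Point, 3 • R = 0 →
        ∃ R₀ : (W.baseChange K).toAffine.Point, Point.map (W' := W) (Algebra.ofId K (AlgebraicClosure K)) R₀ = R :=
  threeTorsion_defined_over_K_general hζ W Q hQ x y h hP hPQ hx
end

section
/- The rational points of the elliptic curve y² = x³ − x² + x (the modular curve X₁(2,12), 24A4 in Cremona's tables) form a group isomorphic to ℤ/4ℤ. -/
/-!
Writing `x = a / b` in lowest terms, a rational point of `y² = x³ − x² + x` forces `a = e²`,
`b = s²` and `e⁴ − e²s² + s⁴ = f²`. Via the Pythagorean parametrisation and the four-number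
lemma, a coprime solution of this quartic with `es ≠ 0` and `e² ≠ s²` yields a coprime pair
`X, Y` with `XY ≠ 0` such that `X² + Y²` and `X² + 4Y²` are both squares (Euler: these forms
are concordant), and such pairs admit an infinite descent on `X² + Y²`. Hence `x ∈ {0, 1}`, the
rational points are `O, (0, 0), (1, ±1)`, and `(1, 1)` has order 4.
-/

open WeierstrassCurve

/-- The modular curve `X₁(2,12)`: the elliptic curve `y² = x³ − x² + x` (24A4). -/
def X1212 : WeierstrassCurve ℚ := ⟨0, -1, 0, 1, 0⟩

theorem IsCoprime.exists_mul_eq_of_mul_eq_mul {R : Type*} [CommRing R] [IsDomain R]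
    [DecompositionMonoid R] {A B m n : R} (hAB : IsCoprime A B) (hA : A ≠ 0)
    (h : A * B = m * n) :
    ∃ d₁ d₂ d₃ d₄, A = d₁ * d₃ ∧ B = d₂ * d₄ ∧ m = d₁ * d₂ ∧ n = d₃ * d₄ ∧
      IsCoprime d₁ d₄ ∧ IsCoprime d₂ d₃ := by
  obtain ⟨d₁, d₃, ⟨d₂, rfl⟩, ⟨d₄, rfl⟩, rfl⟩ :=
    exists_dvd_and_dvd_of_dvd_mul (Dvd.intro B h)
  obtain rfl : B = d₂ * d₄ := mul_left_cancel₀ hA (by rw [h]; ring)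
  exact ⟨d₁, d₂, d₃, d₄, rfl, rfl, rfl, rfl, hAB.of_mul_left_left.of_mul_right_right,
    hAB.of_mul_left_right.of_mul_right_left.symm⟩

theorem IsCoprime.sq_sub_sq_mul {R : Type*} [CommRing R] {x y : R} (hxy : IsCoprime x y) :
    IsCoprime (x ^ 2 - y ^ 2) (x * y) := by
  have hx : IsCoprime (x ^ 2 - y ^ 2) x := by
    convert (hxy.symm.pow (m := 2) (n := 1)).neg_left.add_mul_left_left x using 1 <;> ring
  have hy : IsCoprime (x ^ 2 - y ^ 2) y := by
    convert (hxy.pow (m := 2) (n := 1)).add_mul_left_left (-y) using 1 <;> ring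
  exact hx.mul_right hy

theorem IsCoprime.sq_sub_mul_add_sq {R : Type*} [CommRing R] {x y : R} (hxy : IsCoprime x y) :
    IsCoprime x (x ^ 2 - x * y + y ^ 2) := by
  have := (hxy.pow_right (n := 2)).add_mul_left_right (x - y)
  rwa [show y ^ 2 + x * (x - y) = x ^ 2 - x * y + y ^ 2 by ring] at this

namespace Int

theorem eq_of_mul_eq_mul_of_isCoprime {a b A B : ℤ} (h : a * A = b * B)
    (hab : IsCoprime a b) (hAB : IsCoprime A B) (hA : 0 ≤ A) (hb : 0 ≤ b) : A = b :=
  Int.dvd_antisymm hA hb (hAB.dvd_of_dvd_mul_right (Dvd.intro_left a h))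
    (hab.symm.dvd_of_dvd_mul_left (Dvd.intro B h.symm))

theorem isSquare_of_isCoprime_of_isSquare_mul {m n : ℤ} (hmn : IsCoprime m n) (hm : 0 ≤ m)
    (h : IsSquare (m * n)) : IsSquare m := by
  obtain ⟨r, hr⟩ := h
  obtain ⟨m₀, rfl | rfl⟩ := Int.sq_of_isCoprime hmn (by rw [hr, sq])
  · exact ⟨m₀, sq m₀⟩
  · obtain rfl : m₀ = 0 := pow_eq_zero_iff two_ne_zero |>.mp (by linarith [sq_nonneg m₀])
    exact ⟨0, by ring⟩

theorem not_three_dvd_sq_add_sq {x y : ℤ} (hxy : IsCoprime x y) : ¬ 3 ∣ x ^ 2 + y ^ 2 := by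
  intro h
  have hmod : (x : ZMod 3) ^ 2 + (y : ZMod 3) ^ 2 = 0 := by
    exact_mod_cast (ZMod.intCast_zmod_eq_zero_iff_dvd _ 3).mpr h
  have key : ∀ a b : ZMod 3, a ^ 2 + b ^ 2 = 0 → a = 0 ∧ b = 0 := by decide
  obtain ⟨hx, hy⟩ := key _ _ hmod
  have := hxy.isUnit_of_dvd' ((ZMod.intCast_zmod_eq_zero_iff_dvd x 3).mp hx)
    ((ZMod.intCast_zmod_eq_zero_iff_dvd y 3).mp hy)
  norm_num [Int.isUnit_iff] at this

theorem isCoprime_sq_add_sq_sq_add_four_mul_sq {x y : ℤ} (hxy : IsCoprime x y) :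
    IsCoprime (x ^ 2 + y ^ 2) (x ^ 2 + 4 * y ^ 2) := by
  have hA := Int.gcd_dvd_left (x ^ 2 + y ^ 2) (x ^ 2 + 4 * y ^ 2)
  have hB := Int.gcd_dvd_right (x ^ 2 + y ^ 2) (x ^ 2 + 4 * y ^ 2)
  obtain ⟨u, v, huv⟩ := hxy.pow (m := 2) (n := 2)
  have h3 : Int.gcd (x ^ 2 + y ^ 2) (x ^ 2 + 4 * y ^ 2) ∣ 3 := by
    have e : (3 : ℤ) = (4 * u - v) * (x ^ 2 + y ^ 2) + (v - u) * (x ^ 2 + 4 * y ^ 2) := by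
      linear_combination -3 * huv
    exact_mod_cast e ▸ dvd_add (hA.mul_left _) (hB.mul_left _)
  rw [Int.isCoprime_iff_gcd_eq_one]
  rcases (Nat.dvd_prime Nat.prime_three).mp h3 with h1 | h1
  · exact h1
  · rw [h1] at hA
    exact absurd hA (not_three_dvd_sq_add_sq hxy)

theorem exists_sq_sub_sq_of_isSquare_sq_add_sq {x y : ℤ} (hxy : IsCoprime x y) (hx : Odd x)
    (h : IsSquare (x ^ 2 + y ^ 2)) :
    ∃ m n, x = m ^ 2 - n ^ 2 ∧ y = 2 * m * n ∧ IsCoprime m n ∧ (Even m ∨ Even n) := by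
  obtain ⟨z, hz⟩ := h
  have hx0 : x ≠ 0 := by rintro rfl; exact Int.not_odd_zero hx
  have hz0 : 0 < |z| := abs_pos.mpr <| by
    rintro rfl
    have : 0 < x ^ 2 + y ^ 2 := by positivity
    simp_all
  have ht : PythagoreanTriple x y |z| := by
    unfold PythagoreanTriple; rw [← abs_mul_abs_self z] at hz; linear_combination hz
  obtain ⟨m, n, rfl, rfl, -, hmn, hpar, -⟩ :=
    ht.coprime_classification' (Int.isCoprime_iff_gcd_eq_one.mp hxy) (Int.odd_iff.mp hx) hz0
  refine ⟨m, n, rfl, rfl, Int.isCoprime_iff_gcd_eq_one.mpr hmn, ?_⟩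
  rcases hpar with ⟨hm, -⟩ | ⟨-, hn⟩
  · exact .inl (Int.even_iff.mpr hm)
  · exact .inr (Int.even_iff.mpr hn)

end Int

def OneFourConcordant (X Y : ℤ) : Prop :=
  IsCoprime X Y ∧ X * Y ≠ 0 ∧ IsSquare (X ^ 2 + Y ^ 2) ∧ IsSquare (X ^ 2 + 4 * Y ^ 2)

theorem exists_oneFourConcordant_of_even {m n M N : ℤ} (hMN : IsCoprime M N) (hM : Even M)
    (hMN0 : M * N ≠ 0) (hsub : m ^ 2 - n ^ 2 = M ^ 2 - N ^ 2) (hmul : M * N = 2 * (m * n)) :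
    ∃ X Y, OneFourConcordant X Y ∧ 4 * (X ^ 2 + Y ^ 2) ≤ M ^ 2 := by
  obtain ⟨M₁, rfl⟩ := hM
  have hN0 : N ≠ 0 := right_ne_zero_of_mul hMN0
  have hco : IsCoprime N M₁ := hMN.symm.of_isCoprime_of_dvd_right ⟨2, by ring⟩
  obtain ⟨d₁, d₂, d₃, d₄, rfl, rfl, rfl, rfl, h14, h23⟩ :=
    hco.exists_mul_eq_of_mul_eq_mul (m := m) (n := n) hN0 (by linarith)
  have key : d₁ ^ 2 * (d₃ ^ 2 + d₂ ^ 2) = d₄ ^ 2 * (d₃ ^ 2 + 4 * d₂ ^ 2) := by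
    linear_combination hsub
  have hcop := Int.isCoprime_sq_add_sq_sq_add_four_mul_sq h23.symm
  have h4 : d₃ ^ 2 + d₂ ^ 2 = d₄ ^ 2 :=
    Int.eq_of_mul_eq_mul_of_isCoprime key h14.pow hcop (by positivity) (by positivity)
  have h1 : d₃ ^ 2 + 4 * d₂ ^ 2 = d₁ ^ 2 :=
    Int.eq_of_mul_eq_mul_of_isCoprime key.symm h14.symm.pow hcop.symm (by positivity)
      (by positivity)
  have hd₂ : d₂ ≠ 0 := by rintro rfl; simp at hMN0
  have hd₃ : d₃ ≠ 0 := by rintro rfl; simp at hMN0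
  refine ⟨d₃, d₂, ⟨h23.symm, mul_ne_zero hd₃ hd₂, ⟨d₄, by rw [h4, sq]⟩, ⟨d₁, by rw [h1, sq]⟩⟩,
    ?_⟩
  have : 0 < d₂ ^ 2 := by positivity
  nlinarith [sq_nonneg d₄]

theorem exists_oneFourConcordant {m n M N : ℤ} (hMN : IsCoprime M N) (hpar : Even M ∨ Even N)
    (hMN0 : M * N ≠ 0) (hsub : m ^ 2 - n ^ 2 = M ^ 2 - N ^ 2) (hmul : M * N = 2 * (m * n)) :
    ∃ X Y, OneFourConcordant X Y ∧ 4 * (X ^ 2 + Y ^ 2) ≤ (M * N) ^ 2 := by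
  have hM : 0 < M ^ 2 := by have := left_ne_zero_of_mul hMN0; positivity
  have hN : 0 < N ^ 2 := by have := right_ne_zero_of_mul hMN0; positivity
  rcases hpar with hpar | hpar
  · obtain ⟨X, Y, h, hle⟩ := exists_oneFourConcordant_of_even hMN hpar hMN0 hsub hmul
    exact ⟨X, Y, h, by nlinarith⟩
  · obtain ⟨X, Y, h, hle⟩ := exists_oneFourConcordant_of_even (m := n) (n := m) hMN.symm hpar
      (by rwa [mul_comm]) (by linear_combination -hsub) (by linear_combination hmul)
    exact ⟨X, Y, h, by nlinarith⟩

namespace OneFourConcordant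

theorem swap_of_two_mul {X Y : ℤ} (h : OneFourConcordant (2 * X) Y) :
    OneFourConcordant Y X := by
  obtain ⟨hco, h0, hq, r, hr⟩ := h
  have hr2 : Even (r * r) := ⟨2 * (X ^ 2 + Y ^ 2), by linear_combination -hr⟩
  obtain ⟨s, rfl⟩ : Even r := by simpa [Int.even_mul] using hr2
  exact ⟨hco.of_mul_left_right.symm, fun h ↦ h0 (by linear_combination 2 * h),
    ⟨s, by linarith⟩, by convert hq using 1; ring⟩

theorem exists_lt {X Y : ℤ} (h : OneFourConcordant X Y) :
    ∃ X' Y', OneFourConcordant X' Y' ∧ X' ^ 2 + Y' ^ 2 < X ^ 2 + Y ^ 2 := by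
  have hX0 : X ≠ 0 := left_ne_zero_of_mul h.2.1
  rcases Int.even_or_odd X with ⟨X', rfl⟩ | hX
  · refine ⟨Y, X', swap_of_two_mul (by rwa [← two_mul] at h), ?_⟩
    have : X' ≠ 0 := by rintro rfl; simp at hX0
    have : 0 < X' ^ 2 := by positivity
    linarith
  · obtain ⟨hco, h0, hq, hr⟩ := h
    -- Parametrise both triples `(X, Y, ·)` and `(X, 2Y, ·)`: then `Y = 2mn = MN`.
    obtain ⟨m, n, hXmn, hYmn, -, -⟩ := Int.exists_sq_sub_sq_of_isSquare_sq_add_sq hco hX hq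
    obtain ⟨M, N, hXMN, hYMN, hMN, hpar⟩ := Int.exists_sq_sub_sq_of_isSquare_sq_add_sq
      ((Int.isCoprime_two_right.mpr hX).mul_right hco) hX (by convert hr using 1; ring)
    have hY : Y = M * N := by linarith
    subst hY
    obtain ⟨X', Y', h', hle⟩ := exists_oneFourConcordant (m := m) (n := n) hMN hpar
      (right_ne_zero_of_mul h0) (hXmn ▸ hXMN) (by linear_combination hYmn)
    have : 0 < X ^ 2 := by positivity
    exact ⟨X', Y', h', by linarith [sq_nonneg (M * N)]⟩

end OneFourConcordant

theorem not_oneFourConcordant (X Y : ℤ) : ¬ OneFourConcordant X Y := by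
  suffices ∀ k : ℕ, ∀ X Y : ℤ, X ^ 2 + Y ^ 2 < k → ¬ OneFourConcordant X Y from
    this ((X ^ 2 + Y ^ 2).toNat + 1) X Y
      (by push_cast; linarith [Int.self_le_toNat (X ^ 2 + Y ^ 2)])
  intro k
  induction k with
  | zero => intro X Y h; push_cast at h; nlinarith [sq_nonneg X, sq_nonneg Y]
  | succ k ih =>
    intro X Y hk h
    obtain ⟨X', Y', h', hlt⟩ := h.exists_lt
    exact ih X' Y' (by push_cast at hk; linarith) h'

theorem mul_eq_zero_of_sq_sub_sq_eq {m n M N : ℤ} (hMN : IsCoprime M N) (hpar : Even M ∨ Even N)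
    (hsub : m ^ 2 - n ^ 2 = M ^ 2 - N ^ 2) (hmul : M * N = 2 * (m * n)) : M * N = 0 := by
  by_contra hMN0
  obtain ⟨X, Y, h, -⟩ := exists_oneFourConcordant hMN hpar hMN0 hsub hmul
  exact not_oneFourConcordant X Y h

theorem Int.mul_eq_zero_or_sq_eq_sq_of_isSquare {a b : ℤ} (hab : IsCoprime a b)
    (h : IsSquare (a ^ 4 - a ^ 2 * b ^ 2 + b ^ 4)) : a * b = 0 ∨ a ^ 2 = b ^ 2 := by
  have hab2 : ¬ (2 ∣ a ∧ 2 ∣ b) := fun ⟨ha, hb⟩ ↦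
    Int.not_even_iff_odd.mpr (Int.isCoprime_two_right.mp (hab.of_isCoprime_of_dvd_right hb))
      (even_iff_two_dvd.mpr ha)
  rcases Int.even_or_odd (a + b) with ⟨p, hp⟩ | hodd
  · -- With `a = p + q`, `b = p - q` the quartic becomes `(p² − q²)² + (4pq)² = □`.
    obtain ⟨q, rfl, rfl⟩ : ∃ q, a = p + q ∧ b = p - q := ⟨p - b, by omega, by omega⟩
    have hpq : IsCoprime p q := by
      obtain ⟨u, v, huv⟩ := hab
      exact ⟨u + v, u - v, by linear_combination huv⟩
    have hX : Odd (p ^ 2 - q ^ 2) := by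
      rw [show p ^ 2 - q ^ 2 = (p + q) * (p - q) by ring, Int.odd_mul, Int.odd_iff, Int.odd_iff]
      omega
    have h2 := Int.isCoprime_two_right.mpr hX
    obtain ⟨m, n, hXmn, hYmn, hmn, hpar⟩ := Int.exists_sq_sub_sq_of_isSquare_sq_add_sq
      (h2.mul_right (h2.mul_right hpq.sq_sub_sq_mul)) hX (by convert h using 1; ring)
    have hmul : m * n = 2 * (p * q) := by linarith
    have := mul_eq_zero_of_sq_sub_sq_eq hmn hpar hXmn hmul
    right
    linarith
  · -- The quartic is `(a² − b²)² + (ab)² = □`.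
    have hX : Odd (a ^ 2 - b ^ 2) := by
      rw [show a ^ 2 - b ^ 2 = (a + b) * (a - b) by ring, Int.odd_mul, Int.odd_iff, Int.odd_iff]
      rw [Int.odd_iff] at hodd
      omega
    have hpar : Even a ∨ Even b := by
      rcases Int.even_or_odd a with ha | ha
      · exact .inl ha
      · exact .inr (Int.odd_add.mp hodd |>.mp ha)
    obtain ⟨m, n, hXmn, hYmn, -, -⟩ := Int.exists_sq_sub_sq_of_isSquare_sq_add_sq
      hab.sq_sub_sq_mul hX (by convert h using 1; ring)
    exact .inl (mul_eq_zero_of_sq_sub_sq_eq hab hpar hXmn.symm (by linarith))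

theorem Rat.eq_zero_or_eq_one_of_isSquare {x : ℚ} (h : IsSquare (x ^ 3 - x ^ 2 + x)) :
    x = 0 ∨ x = 1 := by
  obtain ⟨a, b, hb, hab, rfl⟩ : ∃ a b : ℤ, 0 < b ∧ IsCoprime a b ∧ x = a / b :=
    ⟨x.num, x.den, by positivity, Int.isCoprime_iff_nat_coprime.mpr (by simpa using x.reduced),
      (Rat.num_div_den x).symm⟩
  have hc : 0 < a ^ 2 - a * b + b ^ 2 := by nlinarith [sq_nonneg (2 * a - b)]
  have hac : IsCoprime a (a ^ 2 - a * b + b ^ 2) := hab.sq_sub_mul_add_sq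
  have hbc : IsCoprime b (a ^ 2 - a * b + b ^ 2) := by
    have := hab.symm.sq_sub_mul_add_sq
    rwa [show b ^ 2 - b * a + a ^ 2 = a ^ 2 - a * b + b ^ 2 by ring] at this
  have habc : IsSquare (a * (b * (a ^ 2 - a * b + b ^ 2))) := by
    rw [← Rat.isSquare_intCast_iff]
    have e : (↑(a * (b * (a ^ 2 - a * b + b ^ 2))) : ℚ) =
        (b : ℚ) ^ 4 * ((a / b) ^ 3 - (a / b) ^ 2 + a / b) := by
      field_simp
      push_cast
      ring
    exact e ▸ IsSquare.mul ⟨(b : ℚ) ^ 2, by ring⟩ h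
  have ha : 0 ≤ a := nonneg_of_mul_nonneg_left habc.nonneg (by positivity)
  obtain ⟨e, rfl⟩ := Int.isSquare_of_isCoprime_of_isSquare_mul (hab.mul_right hac) ha habc
  obtain ⟨s, rfl⟩ := Int.isSquare_of_isCoprime_of_isSquare_mul (hab.symm.mul_right hbc) hb.le
    (by convert habc using 1; ring)
  obtain ⟨f, hf⟩ := Int.isSquare_of_isCoprime_of_isSquare_mul (hac.symm.mul_right hbc.symm)
    hc.le (by convert habc using 1; ring)
  rcases Int.mul_eq_zero_or_sq_eq_sq_of_isSquare hab.of_mul_left_left.of_mul_right_left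
    ⟨f, by rw [← hf]; ring⟩ with h0 | h1
  · left
    have : e = 0 := by rcases mul_eq_zero.mp h0 with h | h <;> simp_all
    simp [this]
  · right
    have : e * e = s * s := by linear_combination h1
    rw [this, div_self (by positivity)]

namespace X1212

open WeierstrassCurve.Affine

theorem equation_iff (x y : ℚ) : X1212.toAffine.Equation x y ↔ y ^ 2 = x ^ 3 - x ^ 2 + x := by
  rw [Affine.equation_iff]
  simp only [X1212]
  constructor <;> intro h <;> linear_combination h

theorem nonsingular_zero_zero : X1212.toAffine.Nonsingular 0 0 := by
  simp [nonsingular_iff, Affine.equation_iff, X1212]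

theorem nonsingular_one_one : X1212.toAffine.Nonsingular 1 1 := by
  norm_num [nonsingular_iff, Affine.equation_iff, X1212]

noncomputable def T : X1212.toAffine.Point := .some 0 0 nonsingular_zero_zero

noncomputable def P : X1212.toAffine.Point := .some 1 1 nonsingular_one_one

theorem two_zsmul_P : (2 : ℤ) • P = T := by
  have hy : (1 : ℚ) ≠ X1212.toAffine.negY 1 1 := by norm_num [negY, X1212]
  rw [two_zsmul, P, T, Point.add_self_of_Y_ne hy]
  congr 1 <;> norm_num [slope_of_Y_ne rfl hy, addY, negAddY, addX, negY, X1212]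

theorem four_zsmul_P : (4 : ℤ) • P = 0 := by
  rw [show (4 : ℤ) = 2 + 2 by norm_num, add_zsmul, two_zsmul_P, T,
    Point.add_self_of_Y_eq (by simp [negY, X1212])]

theorem eq_zero_or_eq_T_or_eq_P_or_eq_neg_P (R : X1212.toAffine.Point) :
    R = 0 ∨ R = T ∨ R = P ∨ R = -P := by
  rcases R with _ | ⟨x, y, hxy⟩
  · exact .inl rfl
  have hy : y ^ 2 = x ^ 3 - x ^ 2 + x := (equation_iff x y).mp hxy.1
  rcases Rat.eq_zero_or_eq_one_of_isSquare ⟨y, hy ▸ sq y⟩ with rfl | rfl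
  · obtain rfl : y = 0 := by simpa using hy
    exact .inr (.inl rfl)
  · rcases sq_eq_one_iff.mp (by linear_combination hy) with rfl | rfl
    · exact .inr (.inr (.inl rfl))
    · refine .inr (.inr (.inr ?_))
      rw [P, Point.neg_some]
      congr 1
      norm_num [negY, X1212]

noncomputable def zmultiplesP : ZMod 4 →+ X1212.toAffine.Point :=
  ZMod.lift 4 ⟨zmultiplesHom _ P, by simpa using four_zsmul_P⟩

theorem zmultiplesP_intCast (k : ℤ) : zmultiplesP k = k • P :=
  ZMod.lift_coe _ _ _

theorem zmultiplesP_bijective : Function.Bijective zmultiplesP := by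
  have h1 : zmultiplesP 1 = P := by simpa using zmultiplesP_intCast 1
  have h2 : zmultiplesP 2 = T := by simpa [two_zsmul_P] using zmultiplesP_intCast 2
  have h3 : zmultiplesP 3 = -P := by
    rw [eq_neg_iff_add_eq_zero, ← h1, ← map_add,
      show (3 + 1 : ZMod 4) = ((4 : ℤ) : ZMod 4) by decide, zmultiplesP_intCast, four_zsmul_P]
  constructor
  · rw [injective_iff_map_eq_zero]
    intro k hk
    obtain rfl | rfl | rfl | rfl : k = 0 ∨ k = 1 ∨ k = 2 ∨ k = 3 := by
      clear hk; revert k; decide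
    · rfl
    · exact absurd (h1 ▸ hk) (Point.some_ne_zero _)
    · exact absurd (h2 ▸ hk) (Point.some_ne_zero _)
    · exact absurd (h3 ▸ hk) (neg_ne_zero.mpr (Point.some_ne_zero _))
  · intro R
    rcases eq_zero_or_eq_T_or_eq_P_or_eq_neg_P R with rfl | rfl | rfl | rfl
    exacts [⟨0, map_zero _⟩, ⟨2, h2⟩, ⟨1, h1⟩, ⟨3, h3⟩]

end X1212

/-- The group of rational points of `y² = x³ − x² + x` (the modular curve `X₁(2,12)`)
is isomorphic to `ℤ/4ℤ`. -/
theorem X1212_rat_points_equiv_zmod_four :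
    Nonempty (X1212.toAffine.Point ≃+ ZMod 4) :=
  ⟨(AddEquiv.ofBijective _ X1212.zmultiplesP_bijective).symm⟩
end

section
/- The rational points of the elliptic curve y² + y = x³ (the modular curve X₁(3,9), 27A3 in Cremona's tables) form a group isomorphic to ℤ/3ℤ; explicitly E(ℚ) = {O, (0,0), (0,−1)}. -/
/-!
Write `x = a/m` and `y = b/n` in lowest terms. Both sides of `y² + y = x³` are then fractions in
lowest terms, `b(b + n)/n²` and `a³/m³`, so `n² = m³`, whence `n = c³`, and `b(b + c³) = a³`.
The coprime factors `b` and `b + c³` are cubes `s³` and `t³` with `s³ + c³ = t³`, so Fermat's Last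
Theorem for exponent 3 forces `b = 0` or `b = -c³`, that is `y = 0` or `y = -1`, and then `x = 0`.
Hence `E(ℚ)` has exactly three points, and a group of prime order 3 is `ℤ/3ℤ`.
-/

open WeierstrassCurve

/-- The modular curve `X₁(3,9)`: the elliptic curve `y² + y = x³` (27A3). -/
def X139 : WeierstrassCurve ℚ := ⟨0, 0, 1, 0, 0⟩

theorem Int.eq_zero_or_eq_neg_cube_of_mul_add_cube_eq_cube {a b c : ℤ} (hc : c ≠ 0)
    (hbc : IsCoprime b c) (h : b * (b + c ^ 3) = a ^ 3) : b = 0 ∨ b = -c ^ 3 := by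
  have hcop : IsCoprime b (b + c ^ 3) := by
    simpa [add_comm] using hbc.pow_right.add_mul_left_right 1
  obtain ⟨s, rfl⟩ := Int.eq_pow_of_mul_eq_pow_odd_left hcop (by decide) h
  obtain ⟨t, ht⟩ := Int.eq_pow_of_mul_eq_pow_odd_right hcop (by decide) h
  by_cases hs : s = 0
  · simp [hs]
  by_cases ht0 : t = 0
  · subst ht0
    right
    linear_combination ht
  exact absurd (by linear_combination ht)
    (fermatLastTheoremFor_iff_int.mp fermatLastTheoremThree s c t hs hc ht0)

theorem Rat.sq_add_self_eq_div (y : ℚ) :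
    y ^ 2 + y = ((y.num * (y.num + y.den) : ℤ) : ℚ) / ((y.den : ℤ) ^ 2 : ℤ) := by
  conv_lhs => rw [← y.num_div_den]
  field_simp
  push_cast
  ring

theorem Rat.isCoprime_num_mul_num_add_den_sq (y : ℚ) :
    IsCoprime (y.num * (y.num + y.den)) ((y.den : ℤ) ^ 2) := by
  have h := y.isCoprime_num_den
  exact (h.mul_left (by simpa using h.add_mul_left_left 1)).pow_right

theorem Rat.cube_eq_div (x : ℚ) : x ^ 3 = ((x.num ^ 3 : ℤ) : ℚ) / ((x.den : ℤ) ^ 3 : ℤ) := by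
  conv_lhs => rw [← x.num_div_den]
  push_cast
  ring

theorem Rat.sq_add_self_eq_cube_iff {x y : ℚ} :
    y ^ 2 + y = x ^ 3 ↔ x = 0 ∧ (y = 0 ∨ y = -1) := by
  refine ⟨fun h => ?_, by rintro ⟨rfl, rfl | rfl⟩ <;> norm_num⟩
  obtain ⟨hnum, hden⟩ := Rat.div_int_inj (by positivity) (by positivity)
    (Int.isCoprime_iff_gcd_eq_one.mp y.isCoprime_num_mul_num_add_den_sq)
    (Int.isCoprime_iff_gcd_eq_one.mp (x.isCoprime_num_den.pow (m := 3) (n := 3)))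
    ((Rat.sq_add_self_eq_div y).symm.trans (h.trans (Rat.cube_eq_div x)))
  obtain ⟨c, -, hc⟩ := Nat.exists_eq_pow_of_exponent_coprime_of_pow_eq_pow (by decide)
    (by exact_mod_cast hden.symm : x.den ^ 3 = y.den ^ 2)
  have hyc : y.den = (c : ℤ) ^ 3 := by exact_mod_cast hc
  have hy : y = 0 ∨ y = -1 := by
    have hc0 : (c : ℤ) ≠ 0 := by
      rintro h0
      simp [h0] at hyc
    have hcop : IsCoprime y.num c :=
      IsCoprime.pow_right_iff three_pos |>.mp (hyc ▸ y.isCoprime_num_den)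
    rw [hyc] at hnum
    refine (Int.eq_zero_or_eq_neg_cube_of_mul_add_cube_eq_cube hc0 hcop hnum).imp
      Rat.num_eq_zero.mp fun hneg => ?_
    rw [← y.num_div_den, hneg, ← hyc]
    push_cast
    field_simp
  refine ⟨pow_eq_zero_iff three_ne_zero |>.mp ?_, hy⟩
  rcases hy with rfl | rfl <;> linear_combination -h

theorem X139_equation_iff (x y : ℚ) : X139.toAffine.Equation x y ↔ y ^ 2 + y = x ^ 3 := by
  rw [Affine.equation_iff]
  simp only [X139]
  constructor <;> intro h <;> linear_combination h

theorem X139_nonsingular_zero {y : ℚ} (hy : y = 0 ∨ y = -1) : X139.toAffine.Nonsingular 0 y := by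
  rw [Affine.nonsingular_iff, Affine.equation_iff]
  rcases hy with rfl | rfl <;> norm_num [X139]

theorem X139_card_point : Nat.card X139.toAffine.Point = 3 := by
  rw [← Set.ncard_univ, Set.ncard_eq_three]
  refine ⟨0, .some 0 0 (X139_nonsingular_zero (.inl rfl)),
    .some 0 (-1) (X139_nonsingular_zero (.inr rfl)), by simp, by simp, by simp, ?_⟩
  ext (_ | ⟨x, y, h⟩)
  · exact iff_of_true trivial (.inl rfl)
  · obtain ⟨rfl, rfl | rfl⟩ := Rat.sq_add_self_eq_cube_iff.mp ((X139_equation_iff x y).mp h.1)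
      <;> simp

/-- The group of rational points of `y² + y = x³` (the modular curve `X₁(3,9)`) is isomorphic
to `ℤ/3ℤ`; explicitly, the only affine rational points are `(0,0)` and `(0,−1)`. -/
theorem X139_rat_points_equiv_zmod_three :
    Nonempty (X139.toAffine.Point ≃+ ZMod 3) ∧
      ∀ x y : ℚ, X139.toAffine.Equation x y → x = 0 ∧ (y = 0 ∨ y = -1) :=
  ⟨⟨addEquivOfPrimeCardEq X139_card_point (Nat.card_zmod 3)⟩,
    fun x y h => Rat.sq_add_self_eq_cube_iff.mp ((X139_equation_iff x y).mp h)⟩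
end
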